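/- Let L be an ω-Lie algebra over a field K of characteristic ≠ 2 and let R : L → L be a compatible Rota-Baxter operator of weight 0 on L with R ∘ R = 0. Define [x,y]_R := [R(x),y] + [x,R(y)]. Then (L, [-,-]_R, R) is a Hom-Lie algebra with twisting map α = R; that is, [-,-]_R is skew-symmetric bilinear and [[x,y]_R, R(z)]_R + [[y,z]_R, R(x)]_R + [[z,x]_R, R(y)]_R = 0 for all x,y,z ∈ L. -/
import Mathlib


/-- If `R` is a compatible Rota-Baxter operator of weight 0 on an ω-Lie
algebra `L` with `R ∘ R = 0`, then `(L, [-,-]_R, R)` is a Hom-Lie algebra, where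
`[x,y]_R := [R x, y] + [x, R y]`. -/
theorem compatible_square_zero_rotaBaxter_gives_homLie
    {K : Type*} [Field K] (h2 : (2 : K) ≠ 0)
    {L : Type*} [AddCommGroup L] [Module K L]
    (b : L →ₗ[K] L →ₗ[K] L) (ω : L →ₗ[K] L →ₗ[K] K)
    (hskew : ∀ x y : L, b x y = - b y x)
    (hωskew : ∀ x y : L, ω x y = - ω y x)
    (hjac : ∀ x y z : L, b (b x y) z + b (b y z) x + b (b z x) y
      = ω x y • z + ω y z • x + ω z x • y)
    (R : L →ₗ[K] L)
    (hRB : ∀ x y : L, b (R x) (R y) = R (b (R x) y + b x (R y)))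
    (hcomp : ∀ x y : L, ω (R x) y + ω x (R y) = 0)
    (hR2 : ∀ x : L, R (R x) = 0)
    (brR : L → L → L) (hbrR : ∀ x y : L, brR x y = b (R x) y + b x (R y)) :
    (∀ x y : L, brR x y = - brR y x) ∧
    (∀ x y z : L,
      brR (brR x y) (R z) + brR (brR y z) (R x) + brR (brR z x) (R y) = 0) := by
  constructor
  · intro x y
    rw [hbrR, hbrR, hskew (R x) y, hskew x (R y)]
    abel
  · intro x y z
    have hωR : ∀ a c : L, ω (R a) (R c) = 0 := by
      intro a c
      have h := hcomp (R a) c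
      rw [hR2] at h
      simpa using h
    have h1 : ∀ a c d : L, brR (brR a c) (R d) = b (b (R a) (R c)) (R d) := by
      intro a c d
      rw [hbrR (brR a c), hR2, hbrR a c, ← hRB]
      simp
    rw [h1, h1, h1, hjac (R x) (R y) (R z), hωR, hωR, hωR]
    simp
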